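/- Equality elimination is valid in matching logic: ⊨ (φ₁ = φ₂) ∧ φ[φ₁/x] → φ[φ₂/x], where = is the defined matching logic equality and φ[ψ/x] is capture-free substitution. -/

import Mathlib

namespace ML

structure Signature where
  S : Type
  Sym : Type
  n : Sym → ℕ
  arg : (f : Sym) → Fin (n f) → S
  res : Sym → S

inductive Pattern (σ : Signature) : σ.S → Type
  | var (s : σ.S) (x : ℕ) : Pattern σ s
  | app (f : σ.Sym) (args : ∀ i : Fin (σ.n f), Pattern σ (σ.arg f i)) : Pattern σ (σ.res f)
  | neg {s : σ.S} (φ : Pattern σ s) : Pattern σ s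
  | and {s : σ.S} (φ ψ : Pattern σ s) : Pattern σ s
  | ex {s : σ.S} (s' : σ.S) (x : ℕ) (φ : Pattern σ s) : Pattern σ s

namespace Pattern

variable {σ : Signature}

def or {s : σ.S} (φ ψ : Pattern σ s) : Pattern σ s := .neg (.and (.neg φ) (.neg ψ))

def imp {s : σ.S} (φ ψ : Pattern σ s) : Pattern σ s := .or (.neg φ) ψ

def piff {s : σ.S} (φ ψ : Pattern σ s) : Pattern σ s := .and (.imp φ ψ) (.imp ψ φ)

def all {s : σ.S} (s' : σ.S) (x : ℕ) (φ : Pattern σ s) : Pattern σ s :=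
  .neg (.ex s' x (.neg φ))

end Pattern

/-- Free variables of a pattern, as sort-variable pairs. -/
def FV {σ : Signature} : {s : σ.S} → Pattern σ s → Set ((s : σ.S) × ℕ)
  | _, .var s x => {⟨s, x⟩}
  | _, .app _ args => ⋃ i, FV (args i)
  | _, .neg φ => FV φ
  | _, .and φ ψ => FV φ ∪ FV ψ
  | _, .ex s' x φ => FV φ \ {⟨s', x⟩}

structure Model (σ : Signature) where
  carrier : σ.S → Type
  nonempty : ∀ s, Nonempty (carrier s)
  interp : (f : σ.Sym) → (∀ i : Fin (σ.n f), carrier (σ.arg f i)) → Set (carrier (σ.res f))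

def Val {σ : Signature} (M : Model σ) := (s : σ.S) → ℕ → M.carrier s

open Classical in
noncomputable def Val.upd {σ : Signature} {M : Model σ} (ρ : Val M) (s : σ.S) (x : ℕ)
    (a : M.carrier s) : Val M :=
  fun s' y => if h : s' = s ∧ y = x then cast (congrArg M.carrier h.1).symm a else ρ s' y

/-- Pattern evaluation: the set of elements matching the pattern. -/
noncomputable def eval {σ : Signature} {M : Model σ} :
    {s : σ.S} → Pattern σ s → Val M → Set (M.carrier s)
  | _, .var s x, ρ => {ρ s x}
  | _, .app f args, ρ =>
      { b | ∃ a : ∀ i, M.carrier (σ.arg f i), (∀ i, a i ∈ eval (args i) ρ) ∧ b ∈ M.interp f a }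
  | _, .neg φ, ρ => (eval φ ρ)ᶜ
  | _, .and φ ψ, ρ => eval φ ρ ∩ eval ψ ρ
  | _, .ex s' x φ, ρ => ⋃ a : M.carrier s', eval φ (ρ.upd s' x a)

def Sat {σ : Signature} (M : Model σ) {s : σ.S} (φ : Pattern σ s) : Prop :=
  ∀ ρ : Val M, eval φ ρ = Set.univ

def Valid {σ : Signature} {s : σ.S} (φ : Pattern σ s) : Prop :=
  ∀ M : Model σ, Sat M φ

end ML
namespace ML

variable {σ : Signature}

/-- The argument sort of a unary (definedness) symbol. -/
def arg1 (d : σ.Sym) (hn : σ.n d = 1) : σ.S := σ.arg d ⟨0, by omega⟩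

/-- Definedness applied to a pattern: `⌈φ⌉`. -/
noncomputable def ceil (d : σ.Sym) (hn : σ.n d = 1) (φ : Pattern σ (arg1 d hn)) :
    Pattern σ (σ.res d) :=
  .app d (fun j => cast (by
    have hj : j = (⟨0, by omega⟩ : Fin (σ.n d)) := Fin.ext (by have := j.isLt; omega)
    rw [hj]; rfl) φ)

/-- The definedness axiom pattern `⌈x⌉`. -/
noncomputable def defAx (d : σ.Sym) (hn : σ.n d = 1) : Pattern σ (σ.res d) :=
  ceil d hn (.var (arg1 d hn) 0)

/-- Totality `⌊φ⌋ ≡ ¬⌈¬φ⌉`. -/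
noncomputable def floor (d : σ.Sym) (hn : σ.n d = 1) (φ : Pattern σ (arg1 d hn)) :
    Pattern σ (σ.res d) :=
  .neg (ceil d hn (.neg φ))

/-- Equality pattern `φ = φ' ≡ ⌊φ ↔ φ'⌋`. -/
noncomputable def eqP (d : σ.Sym) (hn : σ.n d = 1) (φ φ' : Pattern σ (arg1 d hn)) :
    Pattern σ (σ.res d) :=
  floor d hn (φ.piff φ')

/-- Membership pattern `x ∈ φ ≡ ⌈x ∧ φ⌉`. -/
noncomputable def mem (d : σ.Sym) (hn : σ.n d = 1) (x : ℕ) (φ : Pattern σ (arg1 d hn)) :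
    Pattern σ (σ.res d) :=
  ceil d hn ((Pattern.var (arg1 d hn) x).and φ)

/-- The context `σ(φ₁,…,□,…,φₙ)` with `ψ` plugged into the `i`-th position. -/
def plug (f : σ.Sym) (i : Fin (σ.n f)) (args : ∀ j : Fin (σ.n f), Pattern σ (σ.arg f j))
    (ψ : Pattern σ (σ.arg f i)) : Pattern σ (σ.res f) :=
  .app f (fun j => if h : j = i then cast (by rw [h]) ψ else args j)

/-- Bound variables of a pattern. -/
def BV : {s : σ.S} → Pattern σ s → Set ((s : σ.S) × ℕ)
  | _, .var _ _ => ∅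
  | _, .app _ args => ⋃ i, BV (args i)
  | _, .neg φ => BV φ
  | _, .and φ ψ => BV φ ∪ BV ψ
  | _, .ex s' x φ => BV φ ∪ {⟨s', x⟩}

open Classical in
/-- Substitution `φ[ψ/x]` of pattern `ψ` for variable `x` of sort `t` (capture-free
provided the bound variables of `φ` are disjoint from the free variables of `ψ`). -/
noncomputable def subst : {s : σ.S} → Pattern σ s → (t : σ.S) → ℕ → Pattern σ t → Pattern σ s
  | _, .var s' y, t, x, ψ =>
      if h : s' = t ∧ y = x then cast (by rw [h.1]) ψ else .var s' y
  | _, .app f args, t, x, ψ => .app f (fun i => subst (args i) t x ψ)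
  | _, .neg φ, t, x, ψ => .neg (subst φ t x ψ)
  | _, .and φ₁ φ₂, t, x, ψ => .and (subst φ₁ t x ψ) (subst φ₂ t x ψ)
  | _, .ex s' y φ, t, x, ψ =>
      if s' = t ∧ y = x then .ex s' y φ else .ex s' y (subst φ t x ψ)

/-- Semantic entailment from a set of axiom patterns. -/
def Entails (F : Set ((s : σ.S) × Pattern σ s)) {s : σ.S} (φ : Pattern σ s) : Prop :=
  ∀ M : Model σ, (∀ ψ ∈ F, Sat M ψ.2) → Sat M φ

/-- A pattern is functional in `M` iff it evaluates to a singleton under every valuation. -/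
def Functional (M : Model σ) {s : σ.S} (φ : Pattern σ s) : Prop :=
  ∀ ρ : Val M, ∃ a : M.carrier s, eval φ ρ = {a}

/-!
The definedness axiom makes `⌈ψ⌉` total as soon as `ψ` matches some element, so an element
can satisfy `⌊φ₁ ↔ φ₂⌋` only if `φ₁ ↔ φ₂` matches everything, i.e. only if `φ₁` and `φ₂`
evaluate to the same set. When no free variable of `ψ` is bound in `φ`, the evaluation of
`φ[ψ/x]` depends on `ψ` only through the evaluation of `ψ` (induction on `φ`, where at a
binder the valuation update does not affect `ψ`), so then `φ[φ₁/x]` and `φ[φ₂/x]` match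
the same elements.
-/

section Semantics

variable {M : Model σ}

lemma Val.upd_self (ρ : Val M) (s : σ.S) (x : ℕ) (a : M.carrier s) :
    ρ.upd s x a s x = a := by
  simp [Val.upd]

lemma Val.upd_of_ne (ρ : Val M) {s : σ.S} {x : ℕ} (a : M.carrier s) {v : Σ _ : σ.S, ℕ}
    (h : v ≠ ⟨s, x⟩) : ρ.upd s x a v.1 v.2 = ρ v.1 v.2 := by
  obtain ⟨s', y⟩ := v
  simp only [Val.upd, dite_eq_right_iff]
  rintro ⟨rfl, rfl⟩
  exact absurd rfl h

lemma eval_app_mono {f : σ.Sym} {args args' : ∀ i : Fin (σ.n f), Pattern σ (σ.arg f i)}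
    {ρ ρ' : Val M} (h : ∀ i, eval (args i) ρ ⊆ eval (args' i) ρ') :
    eval (.app f args) ρ ⊆ eval (.app f args') ρ' :=
  fun _ ⟨a, ha, hb⟩ => ⟨a, fun i => h i (ha i), hb⟩

lemma eval_app_congr {f : σ.Sym} {args args' : ∀ i : Fin (σ.n f), Pattern σ (σ.arg f i)}
    {ρ ρ' : Val M} (h : ∀ i, eval (args i) ρ = eval (args' i) ρ') :
    eval (.app f args) ρ = eval (.app f args') ρ' :=
  (eval_app_mono fun i => (h i).le).antisymm (eval_app_mono fun i => (h i).ge)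

lemma eval_congr_of_agree_on_FV {s : σ.S} (φ : Pattern σ s) {ρ ρ' : Val M}
    (h : ∀ v ∈ FV φ, ρ v.1 v.2 = ρ' v.1 v.2) : eval φ ρ = eval φ ρ' := by
  induction φ generalizing ρ ρ' with
  | var s x => simp only [eval, h ⟨s, x⟩ rfl]
  | app f args ih =>
    exact eval_app_congr fun i => ih i fun v hv => h v (Set.mem_iUnion_of_mem i hv)
  | neg φ ih => simp only [eval, ih h]
  | and φ ψ ih₁ ih₂ =>
    simp only [eval, ih₁ fun v hv => h v (Or.inl hv), ih₂ fun v hv => h v (Or.inr hv)]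
  | ex s' y φ ih =>
    refine Set.iUnion_congr fun a => ih fun v hv => ?_
    by_cases hvy : v = ⟨s', y⟩
    · subst hvy
      rw [Val.upd_self, Val.upd_self]
    · rw [Val.upd_of_ne _ _ hvy, Val.upd_of_ne _ _ hvy]
      exact h v ⟨hv, hvy⟩

lemma eval_upd_of_notMem_FV {s t : σ.S} {ψ : Pattern σ t} {y : ℕ} (hy : ⟨s, y⟩ ∉ FV ψ)
    (ρ : Val M) (a : M.carrier s) : eval ψ (ρ.upd s y a) = eval ψ ρ :=
  eval_congr_of_agree_on_FV ψ fun _ hv =>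
    Val.upd_of_ne ρ a fun hvy => hy (hvy ▸ hv)

lemma eval_subst_congr {s t : σ.S} {φ : Pattern σ s} {x : ℕ} {ψ₁ ψ₂ : Pattern σ t}
    (h₁ : Disjoint (FV ψ₁) (BV φ)) (h₂ : Disjoint (FV ψ₂) (BV φ)) {ρ : Val M}
    (h : eval ψ₁ ρ = eval ψ₂ ρ) : eval (subst φ t x ψ₁) ρ = eval (subst φ t x ψ₂) ρ := by
  induction φ generalizing ρ with
  | var s y =>
    by_cases hy : s = t ∧ y = x
    · obtain ⟨rfl, rfl⟩ := hy
      simpa [subst] using h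
    · simp only [subst, dif_neg hy]
  | app f args ih =>
    exact eval_app_congr fun i =>
      have hBV : BV (args i) ⊆ BV (.app f args) := Set.subset_iUnion (fun j => BV (args j)) i
      ih i (h₁.mono_right hBV) (h₂.mono_right hBV) h
  | neg φ ih => simp only [subst, eval, ih h₁ h₂ h]
  | and φ φ' ih ih' =>
    simp only [subst, eval, ih (h₁.mono_right Set.subset_union_left)
      (h₂.mono_right Set.subset_union_left) h, ih' (h₁.mono_right Set.subset_union_right)
      (h₂.mono_right Set.subset_union_right) h]
  | ex s' y φ ih =>
    by_cases hy : s' = t ∧ y = x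
    · simp only [subst, if_pos hy]
    · simp only [subst, if_neg hy, eval]
      have hy₁ : ⟨s', y⟩ ∉ FV ψ₁ := Set.disjoint_right.mp h₁ (Or.inr rfl)
      have hy₂ : ⟨s', y⟩ ∉ FV ψ₂ := Set.disjoint_right.mp h₂ (Or.inr rfl)
      refine Set.iUnion_congr fun a => ih (h₁.mono_right Set.subset_union_left)
        (h₂.mono_right Set.subset_union_left) ?_
      rw [eval_upd_of_notMem_FV hy₁, eval_upd_of_notMem_FV hy₂, h]

lemma eval_imp {s : σ.S} (φ ψ : Pattern σ s) (ρ : Val M) :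
    eval (φ.imp ψ) ρ = (eval φ ρ)ᶜ ∪ eval ψ ρ := by
  simp [Pattern.imp, Pattern.or, eval, Set.compl_inter]

lemma sat_imp_iff {s : σ.S} {φ ψ : Pattern σ s} :
    Sat M (φ.imp ψ) ↔ ∀ ρ : Val M, eval φ ρ ⊆ eval ψ ρ := by
  simp only [Sat, eval_imp, Set.eq_univ_iff_forall, Set.mem_union, Set.mem_compl_iff,
    ← imp_iff_not_or]
  rfl

lemma eval_piff_eq_univ_iff {s : σ.S} {φ ψ : Pattern σ s} {ρ : Val M} :
    eval (φ.piff ψ) ρ = Set.univ ↔ eval φ ρ = eval ψ ρ := by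
  simp only [Pattern.piff, eval, eval_imp, Set.ext_iff, Set.mem_univ, iff_true,
    Set.mem_inter_iff, Set.mem_union, Set.mem_compl_iff]
  exact forall_congr' fun _ => by tauto

end Semantics

section Definedness

variable {M : Model σ} {d : σ.Sym} {hn : σ.n d = 1}

lemma eval_ceil_mono {ψ ψ' : Pattern σ (arg1 d hn)} {ρ ρ' : Val M}
    (h : eval ψ ρ ⊆ eval ψ' ρ') : eval (ceil d hn ψ) ρ ⊆ eval (ceil d hn ψ') ρ' :=
  eval_app_mono fun j => by
    obtain rfl : j = ⟨0, by omega⟩ := Fin.ext (by omega)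
    exact h

lemma eval_ceil_eq_univ (hdef : Sat M (defAx d hn)) {ψ : Pattern σ (arg1 d hn)} {ρ : Val M}
    (hψ : (eval ψ ρ).Nonempty) : eval (ceil d hn ψ) ρ = Set.univ := by
  obtain ⟨c, hc⟩ := hψ
  refine Set.eq_univ_of_univ_subset ?_
  rw [← hdef (ρ.upd _ 0 c)]
  refine eval_ceil_mono ?_
  rintro _ rfl
  rwa [Val.upd_self]

lemma eval_eq_univ_of_mem_eval_floor (hdef : Sat M (defAx d hn)) {ψ : Pattern σ (arg1 d hn)}
    {ρ : Val M} {b : M.carrier (σ.res d)} (hb : b ∈ eval (floor d hn ψ) ρ) :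
    eval ψ ρ = Set.univ := by
  by_contra hψ
  have hneg : (eval (.neg ψ) ρ).Nonempty := Set.nonempty_compl.mpr hψ
  exact hb (eval_ceil_eq_univ hdef hneg ▸ Set.mem_univ b)

end Definedness

end ML

/-- Equality elimination: `⊨ (φ₁ = φ₂) ∧ φ[φ₁/x] → φ[φ₂/x]`,
where the substitutions are capture-free (the free variables of `φ₁, φ₂` avoid
the bound variables of `φ`). -/
theorem stmt14 {σ : ML.Signature} (d : σ.Sym) (hn : σ.n d = 1)
    (φ₁ φ₂ : ML.Pattern σ (ML.arg1 d hn)) (x : ℕ) (φ : ML.Pattern σ (σ.res d))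
    (hc1 : ∀ v ∈ ML.FV φ₁, v ∉ ML.BV φ) (hc2 : ∀ v ∈ ML.FV φ₂, v ∉ ML.BV φ) :
    ∀ M : ML.Model σ, ML.Sat M (ML.defAx d hn) →
      ML.Sat M (((ML.eqP d hn φ₁ φ₂).and (ML.subst φ (ML.arg1 d hn) x φ₁)).imp
        (ML.subst φ (ML.arg1 d hn) x φ₂)) := by
  intro M hdef
  rw [ML.sat_imp_iff]
  rintro ρ b ⟨hb_eq, hb_subst⟩
  have h_eval_eq : ML.eval φ₁ ρ = ML.eval φ₂ ρ :=
    ML.eval_piff_eq_univ_iff.mp (ML.eval_eq_univ_of_mem_eval_floor hdef hb_eq)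
  rwa [← ML.eval_subst_congr (Set.disjoint_left.mpr hc1) (Set.disjoint_left.mpr hc2) h_eval_eq]
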